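/- Let Γ, Σ, Δ be ranked alphabets, ψ a linear tree homomorphism from Γ to Σ and φ a complete tree homomorphism from Γ to Δ, and let ℓ, n ∈ ℕ be such that ℓ > height(ψ(γ)) for every γ ∈ Γ. Then for every tree s over Γ: if SP^ℓ_{n+1}(ψ̂(s)) ≠ ∅, then SP^ℓ_n(φ̂(s)) ≠ ∅. (In bimorphism terms: for every bimorphism B = (ψ, L, φ) with linear input homomorphism ψ and complete output homomorphism φ and every (t, u) ∈ B, if SP^ℓ_{n+1}(t) ≠ ∅ then SP^ℓ_n(u) ≠ ∅.) -/

import Mathlib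

namespace Paper

/-- Trees over a ranked alphabet `(Γ, ar)` as a W-type. -/
abbrev Tree {Γ : Type} (ar : Γ → ℕ) : Type := WType (fun g : Γ => Fin (ar g))

variable {Γ : Type} {ar : Γ → ℕ}

/-- Root symbol of a tree. -/
def root : Tree ar → Γ
  | ⟨g, _⟩ => g

/-- `inPos t w` holds iff `w` is a position of `t`. -/
def inPos : Tree ar → List ℕ → Prop
  | _, [] => True
  | ⟨g, f⟩, i :: w => ∃ h : i < ar g, inPos (f ⟨i, h⟩) w

/-- The set of positions of a tree. -/
def pos (t : Tree ar) : Set (List ℕ) := {w | inPos t w}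

/-- Subtree of `t` at position `w` (junk value if `w` is not a position of `t`). -/
def subtree : Tree ar → List ℕ → Tree ar
  | t, [] => t
  | ⟨g, f⟩, i :: w => if h : i < ar g then subtree (f ⟨i, h⟩) w else ⟨g, f⟩

/-- Branching positions of `t` together with two distinct successor directions. -/
def branch (t : Tree ar) : Set (List ℕ × ℕ × ℕ) :=
  {p | p.1 ∈ pos t ∧ 2 ≤ ar (root (subtree t p.1)) ∧
       p.2.1 < ar (root (subtree t p.1)) ∧ p.2.2 < ar (root (subtree t p.1)) ∧ p.2.1 ≠ p.2.2}

/-- Branching positions of `t` along the path from `w` to `w ++ w''`. -/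
def branchPath (t : Tree ar) (w w'' : List ℕ) : Set (List ℕ) :=
  {v | ∃ w', w' <+: w'' ∧ v = w ++ w' ∧ ∃ i j, (w ++ w', i, j) ∈ branch t}

/-- First projections of a set of triples. -/
def SPof (S : Set (List ℕ × ℕ × ℕ)) : Set (List ℕ) := {w | ∃ i j, (w, i, j) ∈ S}

/-- The sets `SSP^ℓ_n(t)`. -/
def SSP (ℓ : ℕ) : ℕ → Tree ar → Set (List ℕ × ℕ × ℕ)
  | 0, t => branch t
  | n+1, t =>
      {p | p ∈ branch t ∧
        (∃ w₁ ∈ SPof (SSP ℓ n (subtree t (p.1 ++ [p.2.1]))),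
          ℓ ^ (n+1) ≤ (branchPath t (p.1 ++ [p.2.1]) w₁ ∩ SPof (SSP ℓ n t)).ncard) ∧
        (∃ w₂ ∈ SPof (SSP ℓ n (subtree t (p.1 ++ [p.2.2]))),
          ℓ ^ (n+1) ≤ (branchPath t (p.1 ++ [p.2.2]) w₂ ∩ SPof (SSP ℓ n t)).ncard)}

/-- The sets `SP^ℓ_n(t)`. -/
def SP (ℓ n : ℕ) (t : Tree ar) : Set (List ℕ) := SPof (SSP ℓ n t)

/-- Height of a tree: 0 for leaves, otherwise 1 + maximum height of the subtrees. -/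
def height : Tree ar → ℕ
  | ⟨_, f⟩ => Finset.univ.sup fun i => height (f i) + 1

/-- Arity function for the alphabet `Δ` extended with `k` nullary variables. -/
def extAr {Δ : Type} (arΔ : Δ → ℕ) (k : ℕ) : Δ ⊕ Fin k → ℕ := Sum.elim arΔ fun _ => 0

/-- Trees over `Δ` with variables `x_0, …, x_{k-1}`: the set `T_Δ(X_k)`. -/
abbrev TreeX {Δ : Type} (arΔ : Δ → ℕ) (k : ℕ) : Type := Tree (extAr arΔ k)

variable {Δ : Type} {arΔ : Δ → ℕ}

/-- Substitution `s[u 0, …, u (k-1)]` of trees for the variables. -/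
def subst {k : ℕ} (u : Fin k → Tree arΔ) : TreeX arΔ k → Tree arΔ
  | ⟨Sum.inl d, f⟩ => ⟨d, fun i => subst u (f i)⟩
  | ⟨Sum.inr i, _⟩ => u i

/-- The tree map `ĥ` induced by a tree homomorphism `h`. -/
def applyHom {arΓ : Γ → ℕ} (h : ∀ g : Γ, TreeX arΔ (arΓ g)) : Tree arΓ → Tree arΔ
  | ⟨g, f⟩ => subst (fun i => applyHom h (f i)) (h g)

/-- Number of occurrences of the variable `x_i` in a tree of `T_Δ(X_k)`. -/
def varCount {k : ℕ} (i : Fin k) : TreeX arΔ k → ℕ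
  | ⟨Sum.inl _, f⟩ => ∑ j, varCount i (f j)
  | ⟨Sum.inr j, _⟩ => if j = i then 1 else 0

/-- A tree homomorphism is linear if every variable occurs at most once in each image. -/
def Linear {arΓ : Γ → ℕ} (h : ∀ g : Γ, TreeX arΔ (arΓ g)) : Prop :=
  ∀ (g : Γ) (i : Fin (arΓ g)), varCount i (h g) ≤ 1

/-- A tree homomorphism is complete if every variable occurs at least once in each image. -/
def Complete {arΓ : Γ → ℕ} (h : ∀ g : Γ, TreeX arΔ (arΓ g)) : Prop :=
  ∀ (g : Γ) (i : Fin (arΓ g)), 1 ≤ varCount i (h g)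

end Paper

/-!
Following at each node of `s` the chosen occurrence of the selected variable in the image of its
symbol maps the nodes of `s` to positions of `ψ̂ s` and of `φ̂ s` (`imagePos`). Since `ψ` is
linear, every inner position `x` of `ψ̂ s` lies in the copy of `ψ (s(v))` placed at the image of a
unique node `v` of `s`, at depth less than `ℓ - 1` in it; hence a chain of `ℓ * m` positions of
`ψ̂ s` has more than `m` such origins `v`, which again form a chain.

If `x ∈ SP ℓ (n + 1) (ψ̂ s)`, its two long chains leave the copy of `ψ (s(v))` through distinct
variables, that is, towards distinct children of `v`. As `φ` is complete, the images of these two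
children in `φ̂ s` fork at a branching position inside the copy of `φ (s(v))`. By induction on `n`
the chains below the two children are long enough for this branching position to lie in
`SP ℓ n (φ̂ s)`, and the branching positions obtained from the origins of a chain of `ℓ ^ (n + 2)`
positions of `SP ℓ (n + 1) (ψ̂ s)` form a chain of `ℓ ^ (n + 1)` positions of `SP ℓ n (φ̂ s)`.
-/

namespace Paper

section Lists

variable {α : Type*}

lemma exists_fork_of_not_prefix :
    ∀ {x y : List α}, ¬ x <+: y → ¬ y <+: x →
      ∃ c a b, a ≠ b ∧ c ++ [a] <+: x ∧ c ++ [b] <+: y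
  | [], _, hxy, _ => absurd List.nil_prefix hxy
  | _ :: _, [], _, hyx => absurd List.nil_prefix hyx
  | a :: x, b :: y, hxy, hyx => by
    by_cases hab : a = b
    · subst hab
      obtain ⟨c, a', b', hne, ha, hb⟩ :=
        exists_fork_of_not_prefix (mt (List.prefix_cons_inj a).2 hxy)
          (mt (List.prefix_cons_inj a).2 hyx)
      exact ⟨a :: c, a', b', hne, (List.prefix_cons_inj a).2 ha, (List.prefix_cons_inj a).2 hb⟩
    · exact ⟨[], a, b, hab, by simp, by simp⟩

lemma concat_prefix_of_prefix_of_lt {v v' w : List α} {d : α} (hvd : v ++ [d] <+: w)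
    (hv' : v' <+: w) (hvv' : v <+: v') (hne : v ≠ v') : v ++ [d] <+: v' := by
  refine List.prefix_of_prefix_length_le hvd hv' ?_
  have : v.length ≠ v'.length := fun h => hne (hvv'.eq_of_length h)
  have := hvv'.length_le
  simp only [List.length_append, List.length_singleton]
  omega

end Lists

section Positions

variable {Γ : Type} {ar : Γ → ℕ}

@[simp] lemma root_mk (g : Γ) (f : Fin (ar g) → Tree ar) : root (⟨g, f⟩ : Tree ar) = g := rfl

@[simp] lemma inPos_nil (t : Tree ar) : inPos t [] := by cases t; trivial

@[simp] lemma subtree_nil (t : Tree ar) : subtree t [] = t := by cases t; rfl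

lemma subtree_mk_cons {g : Γ} (f : Fin (ar g) → Tree ar) {i : ℕ} (hi : i < ar g)
    (w : List ℕ) : subtree (⟨g, f⟩ : Tree ar) (i :: w) = subtree (f ⟨i, hi⟩) w :=
  dif_pos hi

lemma inPos_of_prefix : ∀ {w₁ w₂ : List ℕ} {t : Tree ar}, w₁ <+: w₂ → inPos t w₂ → inPos t w₁
  | [], _, t, _, _ => inPos_nil t
  | _ :: _, [], _, h, _ => by simp at h
  | i :: w₁, j :: w₂, ⟨g, f⟩, h, ⟨hj, hp⟩ => by
    obtain ⟨rfl, hw⟩ := List.cons_prefix_cons.1 h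
    exact ⟨hj, inPos_of_prefix hw hp⟩

lemma subtree_append : ∀ {w₁ : List ℕ} (w₂ : List ℕ) {t : Tree ar}, inPos t w₁ →
    subtree t (w₁ ++ w₂) = subtree (subtree t w₁) w₂
  | [], _, _, _ => by simp
  | i :: w₁, w₂, ⟨g, f⟩, ⟨hi, hp⟩ => by
    rw [List.cons_append, subtree_mk_cons f hi, subtree_mk_cons f hi, subtree_append w₂ hp]

lemma inPos_append_iff : ∀ {w₁ : List ℕ} {w₂ : List ℕ} {t : Tree ar}, inPos t w₁ →
    (inPos t (w₁ ++ w₂) ↔ inPos (subtree t w₁) w₂)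
  | [], _, _, _ => by simp
  | i :: w₁, w₂, ⟨g, f⟩, ⟨hi, hp⟩ => by
    rw [subtree_mk_cons f hi, ← inPos_append_iff hp]
    exact ⟨fun ⟨_, h⟩ => h, fun h => ⟨hi, h⟩⟩

lemma lt_arity_of_inPos_concat {t : Tree ar} {v : List ℕ} {e : ℕ} (h : inPos t (v ++ [e])) :
    e < ar (root (subtree t v)) := by
  have h' := (inPos_append_iff (inPos_of_prefix (List.prefix_append v [e]) h)).1 h
  cases hs : subtree t v with
  | mk g f =>
    rw [hs] at h'
    exact h'.1

lemma eq_nil_of_inPos_append_of_arity_eq_zero {t : Tree ar} {w x : List ℕ}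
    (h : inPos t (w ++ x)) (hz : ar (root (subtree t w)) = 0) : x = [] := by
  cases x with
  | nil => rfl
  | cons e x =>
    have := lt_arity_of_inPos_concat
      (inPos_of_prefix (by simp [List.prefix_append_right_inj]) h : inPos t (w ++ [e]))
    omega

lemma length_lt_height : ∀ {r : List ℕ} {t : Tree ar}, inPos t r →
    0 < ar (root (subtree t r)) → r.length < height t
  | [], ⟨g, f⟩, _, h => by
    have hlt := Finset.le_sup (f := fun i => height (f i) + 1) (Finset.mem_univ ⟨0, h⟩)
    simp only [height] at hlt ⊢
    simp only [List.length_nil]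
    omega
  | i :: r, ⟨g, f⟩, ⟨hi, hp⟩, h => by
    rw [subtree_mk_cons f hi] at h
    have hlt := Finset.le_sup (f := fun i => height (f i) + 1) (Finset.mem_univ ⟨i, hi⟩)
    have := length_lt_height hp h
    simp only [height] at hlt ⊢
    simp only [List.length_cons]
    omega

end Positions

section SP

variable {Γ : Type} {ar : Γ → ℕ} {ℓ n : ℕ} {t : Tree ar}

lemma branch_swap {w : List ℕ} {i j : ℕ} (h : (w, i, j) ∈ branch t) : (w, j, i) ∈ branch t :=
  ⟨h.1, h.2.1, h.2.2.2.1, h.2.2.1, Ne.symm h.2.2.2.2⟩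

lemma inPos_of_mem_branch {w : List ℕ} {i j : ℕ} (h : (w, i, j) ∈ branch t) :
    inPos t (w ++ [i]) := by
  obtain ⟨hw, -, hi, -⟩ := h
  rw [inPos_append_iff hw]
  cases hs : subtree t w with
  | mk g f =>
    rw [hs] at hi
    exact ⟨hi, inPos_nil _⟩

lemma mem_branch_subtree_iff {q : List ℕ} (hq : inPos t q) {r : List ℕ} {i j : ℕ} :
    (r, i, j) ∈ branch (subtree t q) ↔ (q ++ r, i, j) ∈ branch t := by
  simp only [branch, Set.mem_ofPred_eq, pos, ← subtree_append r hq, inPos_append_iff hq]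

lemma SSP_subset_branch : SSP ℓ n t ⊆ branch t := by
  cases n with
  | zero => exact le_rfl
  | succ n => exact fun _ hp => hp.1

lemma inPos_of_mem_SP {x : List ℕ} (h : x ∈ SP ℓ n t) : inPos t x := by
  obtain ⟨i, j, hij⟩ := h
  exact (SSP_subset_branch hij).1

def SPIcc (ℓ n : ℕ) (t : Tree ar) (a b : List ℕ) : Set (List ℕ) :=
  {x | a <+: x ∧ x <+: b ∧ x ∈ SP ℓ n t}

lemma SPIcc_finite (a b : List ℕ) : (SPIcc ℓ n t a b).Finite :=
  (List.finite_toSet b.inits).subset fun _ hx => (List.mem_inits _ _).2 hx.2.1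

lemma branchPath_inter_SP (a w : List ℕ) :
    branchPath t a w ∩ SP ℓ n t = SPIcc ℓ n t a (a ++ w) := by
  ext y
  constructor
  · rintro ⟨⟨w', hw', rfl, -⟩, hsp⟩
    exact ⟨List.prefix_append a w', (List.prefix_append_right_inj a).2 hw', hsp⟩
  · rintro ⟨⟨w', rfl⟩, hy, ⟨i, j, hij⟩⟩
    exact ⟨⟨w', (List.prefix_append_right_inj a).1 hy, rfl, i, j, SSP_subset_branch hij⟩,
      i, j, hij⟩

lemma mem_SSP_subtree_iff {q : List ℕ} (hq : inPos t q) :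
    ∀ {n : ℕ} {r : List ℕ} {i j : ℕ}, (r, i, j) ∈ SSP ℓ n (subtree t q) ↔ (q ++ r, i, j) ∈ SSP ℓ n t
  | 0, _, _, _ => mem_branch_subtree_iff hq
  | n + 1, r, i, j => by
    have hSP : ∀ x, x ∈ SP ℓ n (subtree t q) ↔ q ++ x ∈ SP ℓ n t := fun x =>
      exists_congr fun _ => exists_congr fun _ => mem_SSP_subtree_iff hq
    have hpath : ∀ a w, branchPath t (q ++ a) w ∩ SP ℓ n t
        = (q ++ ·) '' (branchPath (subtree t q) a w ∩ SP ℓ n (subtree t q)) := by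
      intro a w
      rw [branchPath_inter_SP, branchPath_inter_SP]
      ext y
      constructor
      · rintro ⟨⟨z, rfl⟩, hy, hsp⟩
        simp only [List.append_assoc] at hy hsp ⊢
        exact ⟨a ++ z, ⟨List.prefix_append a z, (List.prefix_append_right_inj q).1 hy,
          (hSP _).2 hsp⟩, rfl⟩
      · rintro ⟨z, ⟨haz, hz, hsp⟩, rfl⟩
        rw [List.append_assoc]
        exact ⟨(List.prefix_append_right_inj q).2 haz, (List.prefix_append_right_inj q).2 hz,
          (hSP _).1 hsp⟩
    have hside : ∀ d : ℕ,
        (∃ w ∈ SPof (SSP ℓ n (subtree (subtree t q) (r ++ [d]))),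
          ℓ ^ (n+1) ≤ (branchPath (subtree t q) (r ++ [d]) w ∩ SP ℓ n (subtree t q)).ncard) ↔
        (∃ w ∈ SPof (SSP ℓ n (subtree t ((q ++ r) ++ [d]))),
          ℓ ^ (n+1) ≤ (branchPath t ((q ++ r) ++ [d]) w ∩ SP ℓ n t).ncard) := by
      intro d
      simp_rw [List.append_assoc, ← subtree_append _ hq, hpath,
        Set.ncard_image_of_injective _ (List.append_right_injective q)]
    exact and_congr (mem_branch_subtree_iff hq) (and_congr (hside i) (hside j))

lemma mem_SP_subtree_iff {q : List ℕ} (hq : inPos t q) {x : List ℕ} :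
    x ∈ SP ℓ n (subtree t q) ↔ q ++ x ∈ SP ℓ n t :=
  exists_congr fun _ => exists_congr fun _ => mem_SSP_subtree_iff hq

/-- The condition that `SSP ℓ n t` imposes on each side of a branching position, with the end of
the path left free. -/
def HasSPChain (ℓ : ℕ) : ℕ → Tree ar → List ℕ → Prop
  | 0, _, _ => True
  | n + 1, t, a => ∃ b, ℓ ^ (n + 1) ≤ (SPIcc ℓ n t a b).ncard

lemma HasSPChain.of_prefix {a a' : List ℕ} (h : HasSPChain ℓ n t a) (ha : a' <+: a) :
    HasSPChain ℓ n t a' := by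
  cases n with
  | zero => trivial
  | succ n =>
    obtain ⟨b, hb⟩ := h
    exact ⟨b, hb.trans <| Set.ncard_le_ncard (fun _ hx => ⟨ha.trans hx.1, hx.2⟩) (SPIcc_finite _ _)⟩

/-- The last `SP`-position of a chain can serve as its endpoint. -/
lemma side_iff_hasSPChain (hℓ : 0 < ℓ) {a : List ℕ} (ha : inPos t a) :
    (∃ w ∈ SPof (SSP ℓ n (subtree t a)), ℓ ^ (n+1) ≤ (branchPath t a w ∩ SP ℓ n t).ncard) ↔
      HasSPChain ℓ (n + 1) t a := by
  simp only [branchPath_inter_SP]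
  constructor
  · rintro ⟨w, -, hw⟩
    exact ⟨a ++ w, hw⟩
  · rintro ⟨b, hb⟩
    have hne : (SPIcc ℓ n t a b).Nonempty :=
      Set.nonempty_of_ncard_ne_zero (by have := Nat.one_le_pow (n + 1) ℓ hℓ; omega)
    obtain ⟨x, hx, hmax⟩ := (SPIcc_finite a b).exists_maximalFor List.length _ hne
    obtain ⟨w, rfl⟩ := hx.1
    refine ⟨w, (mem_SP_subtree_iff ha).2 hx.2.2,
      hb.trans (Set.ncard_le_ncard ?_ (SPIcc_finite _ _))⟩
    intro y hy
    refine ⟨hy.1, ?_, hy.2.2⟩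
    rcases List.prefix_or_prefix_of_prefix hy.2.1 hx.2.1 with h | h
    · exact h
    · exact (h.eq_of_length_le (hmax hy h.length_le)) ▸ List.prefix_rfl

lemma mem_SSP_iff (hℓ : 0 < ℓ) {w : List ℕ} {i j : ℕ} :
    (w, i, j) ∈ SSP ℓ n t ↔ (w, i, j) ∈ branch t ∧
      HasSPChain ℓ n t (w ++ [i]) ∧ HasSPChain ℓ n t (w ++ [j]) := by
  cases n with
  | zero => simp [SSP, HasSPChain]
  | succ n =>
    exact and_congr_right fun hbr => and_congr
      (side_iff_hasSPChain hℓ (inPos_of_mem_branch hbr))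
      (side_iff_hasSPChain hℓ (inPos_of_mem_branch (branch_swap hbr)))

end SP

section Substitution

variable {Δ : Type} {arΔ : Δ → ℕ} {k : ℕ}

def IsVarPos (e : TreeX arΔ k) (π : List ℕ) (i : Fin k) : Prop :=
  inPos e π ∧ root (subtree e π) = Sum.inr i

lemma subtree_subst (u : Fin k → Tree arΔ) :
    ∀ {π : List ℕ} {e : TreeX arΔ k}, inPos e π → subtree (subst u e) π = subst u (subtree e π)
  | [], _, _ => by simp
  | _ :: _, ⟨Sum.inr _, _⟩, ⟨ha, _⟩ => absurd ha (Nat.not_lt_zero _)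
  | a :: π, ⟨Sum.inl d, f⟩, ⟨ha, hp⟩ => by
    rw [subtree_mk_cons f ha, ← subtree_subst u hp]
    exact subtree_mk_cons (ar := arΔ) _ ha π

lemma inPos_subst (u : Fin k → Tree arΔ) :
    ∀ {π : List ℕ} {e : TreeX arΔ k}, inPos e π → inPos (subst u e) π
  | [], _, _ => inPos_nil _
  | _ :: _, ⟨Sum.inr _, _⟩, ⟨ha, _⟩ => absurd ha (Nat.not_lt_zero _)
  | _ :: _, ⟨Sum.inl _, _⟩, ⟨ha, hp⟩ => ⟨ha, inPos_subst u hp⟩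

lemma IsVarPos.subtree_subst (u : Fin k → Tree arΔ) {e : TreeX arΔ k} {π : List ℕ} {i : Fin k}
    (h : IsVarPos e π i) : subtree (subst u e) π = u i := by
  rw [Paper.subtree_subst u h.1]
  obtain ⟨-, hroot⟩ := h
  rcases hs : subtree e π with ⟨_ | j, f⟩
  · simp [hs] at hroot
  · obtain rfl : j = i := by simpa [hs] using hroot
    rfl

lemma inPos_subst_cases (u : Fin k → Tree arΔ) :
    ∀ {e : TreeX arΔ k} {x : List ℕ}, inPos (subst u e) x →
      (inPos e x ∧ ∃ d, root (subtree e x) = Sum.inl d) ∨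
        ∃ i π y, IsVarPos e π i ∧ x = π ++ y ∧ inPos (u i) y
  | ⟨Sum.inr i, _⟩, x, hx => Or.inr ⟨i, [], x, ⟨inPos_nil _, rfl⟩, rfl, hx⟩
  | ⟨Sum.inl d, _⟩, [], _ => Or.inl ⟨inPos_nil _, d, rfl⟩
  | ⟨Sum.inl d, f⟩, a :: x, ⟨ha, hx⟩ => by
    rcases inPos_subst_cases u hx with ⟨hp, d', hd'⟩ | ⟨i, π, y, hv, rfl, hy⟩
    · exact Or.inl ⟨⟨ha, hp⟩, d', by rwa [subtree_mk_cons f ha]⟩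
    · exact Or.inr ⟨i, a :: π, y, ⟨⟨ha, hv.1⟩, by rw [subtree_mk_cons f ha]; exact hv.2⟩, rfl, hy⟩

lemma exists_isVarPos_of_varCount_pos {i : Fin k} :
    ∀ {e : TreeX arΔ k}, 0 < varCount i e → ∃ π, IsVarPos e π i
  | ⟨Sum.inr j, _⟩, h => by
    obtain rfl : j = i := by by_contra hji; simp [varCount, hji] at h
    exact ⟨[], inPos_nil _, rfl⟩
  | ⟨Sum.inl d, f⟩, h => by
    obtain ⟨j, -, hj⟩ := Finset.exists_ne_zero_of_sum_ne_zero h.ne'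
    obtain ⟨π, hπ, hroot⟩ := exists_isVarPos_of_varCount_pos (Nat.pos_of_ne_zero hj)
    exact ⟨j :: π, ⟨j.isLt, hπ⟩, by rw [subtree_mk_cons f j.isLt]; exact hroot⟩

lemma IsVarPos.varCount_pos {i : Fin k} :
    ∀ {π : List ℕ} {e : TreeX arΔ k}, IsVarPos e π i → 0 < varCount i e
  | [], ⟨Sum.inl _, _⟩, ⟨_, h⟩ => by simp [root] at h
  | [], ⟨Sum.inr j, _⟩, ⟨_, h⟩ => by
    obtain rfl : j = i := by simpa [root] using h
    simp [varCount]
  | _ :: _, ⟨Sum.inr _, _⟩, ⟨⟨ha, _⟩, _⟩ => absurd ha (Nat.not_lt_zero _)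
  | a :: π, ⟨Sum.inl d, f⟩, ⟨⟨ha, hp⟩, h⟩ => by
    rw [subtree_mk_cons f ha] at h
    have hv : IsVarPos (f ⟨a, ha⟩) π i := ⟨hp, h⟩
    exact (IsVarPos.varCount_pos hv).trans_le
      (Finset.single_le_sum (f := fun j => varCount i (f j)) (fun _ _ => Nat.zero_le _)
        (Finset.mem_univ (⟨a, ha⟩ : Fin (arΔ d))))

lemma IsVarPos.eq_of_varCount_le_one {i : Fin k} :
    ∀ {e : TreeX arΔ k} {π₁ π₂ : List ℕ}, varCount i e ≤ 1 →
      IsVarPos e π₁ i → IsVarPos e π₂ i → π₁ = π₂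
  | _, [], [], _, _, _ => rfl
  | ⟨Sum.inl _, _⟩, [], _, _, ⟨_, h⟩, _ => by simp [root] at h
  | ⟨Sum.inl _, _⟩, _, [], _, _, ⟨_, h⟩ => by simp [root] at h
  | ⟨Sum.inr _, _⟩, _ :: _, _, _, ⟨⟨ha, _⟩, _⟩, _ => absurd ha (Nat.not_lt_zero _)
  | ⟨Sum.inr _, _⟩, _, _ :: _, _, _, ⟨⟨ha, _⟩, _⟩ => absurd ha (Nat.not_lt_zero _)
  | ⟨Sum.inl d, f⟩, a₁ :: π₁, a₂ :: π₂, hc, ⟨⟨ha₁, hp₁⟩, h₁⟩, ⟨⟨ha₂, hp₂⟩, h₂⟩ => by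
    rw [subtree_mk_cons f ha₁] at h₁
    rw [subtree_mk_cons f ha₂] at h₂
    have hv₁ : IsVarPos (f ⟨a₁, ha₁⟩) π₁ i := ⟨hp₁, h₁⟩
    have hv₂ : IsVarPos (f ⟨a₂, ha₂⟩) π₂ i := ⟨hp₂, h₂⟩
    change ∑ j, varCount i (f j) ≤ 1 at hc
    by_cases ha : a₁ = a₂
    · subst ha
      have hle := Finset.single_le_sum (f := fun j => varCount i (f j))
        (fun _ _ => Nat.zero_le _) (Finset.mem_univ ⟨a₁, ha₁⟩)
      rw [IsVarPos.eq_of_varCount_le_one (hle.trans hc) hv₁ hv₂]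
    · have hsum := Finset.add_le_sum (f := fun j => varCount i (f j)) (fun _ _ => Nat.zero_le _)
        (Finset.mem_univ ⟨a₁, ha₁⟩) (Finset.mem_univ ⟨a₂, ha₂⟩) (by simpa using ha)
      have := hv₁.varCount_pos
      have := hv₂.varCount_pos
      omega

/-- Variables are leaves. -/
lemma IsVarPos.eq_of_prefix {e : TreeX arΔ k} {π r : List ℕ} {i : Fin k} (h : IsVarPos e π i)
    (hr : inPos e r) (hπr : π <+: r) : r = π := by
  obtain ⟨z, rfl⟩ := hπr
  rw [eq_nil_of_inPos_append_of_arity_eq_zero hr (by rw [h.2]; rfl), List.append_nil]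

lemma IsVarPos.not_prefix {e : TreeX arΔ k} {π₁ π₂ : List ℕ} {i₁ i₂ : Fin k}
    (h₁ : IsVarPos e π₁ i₁) (h₂ : IsVarPos e π₂ i₂) (hne : i₁ ≠ i₂) : ¬ π₁ <+: π₂ := by
  intro hπ
  obtain rfl := h₁.eq_of_prefix h₂.1 hπ
  exact hne (Sum.inr_injective (h₁.2.symm.trans h₂.2))

end Substitution

section Images

variable {Γ Δ : Type} {arΓ : Γ → ℕ} {arΔ : Δ → ℕ} (h : ∀ g : Γ, TreeX arΔ (arΓ g))

lemma applyHom_mk (g : Γ) (f : Fin (arΓ g) → Tree arΓ) :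
    applyHom h ⟨g, f⟩ = subst (fun i => applyHom h (f i)) (h g) := rfl

open Classical in
/-- A chosen occurrence of `x_i` in `h g`; junk value `[]` if there is none. -/
noncomputable def occ (g : Γ) (i : ℕ) : List ℕ :=
  if hi : i < arΓ g then if he : ∃ π, IsVarPos (h g) π ⟨i, hi⟩ then he.choose else [] else []

variable {h}

lemma isVarPos_occ {g : Γ} {i : ℕ} (hi : i < arΓ g) (he : ∃ π, IsVarPos (h g) π ⟨i, hi⟩) :
    IsVarPos (h g) (occ h g i) ⟨i, hi⟩ := by
  rw [occ, dif_pos hi, dif_pos he]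
  exact he.choose_spec

lemma eq_occ_of_linear (hlin : Linear h) {g : Γ} {i : ℕ} (hi : i < arΓ g) {π : List ℕ}
    (hπ : IsVarPos (h g) π ⟨i, hi⟩) : π = occ h g i :=
  IsVarPos.eq_of_varCount_le_one (hlin g _) hπ (isVarPos_occ hi ⟨π, hπ⟩)

variable (h)

/-- `v` is a position of `s` along which every step `i` selects a variable `x_i` occurring in the
`h`-image of the current symbol, so that `s|_v` is copied into `ĥ s`. -/
def IsKeptPath : Tree arΓ → List ℕ → Prop
  | _, [] => True
  | ⟨g, f⟩, i :: v =>
    ∃ hi : i < arΓ g, (∃ π, IsVarPos (h g) π ⟨i, hi⟩) ∧ IsKeptPath (f ⟨i, hi⟩) v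

/-- The position of `ĥ s` at which the copy of `s|_v` sits, following the chosen occurrences. -/
noncomputable def imagePos : Tree arΓ → List ℕ → List ℕ
  | _, [] => []
  | ⟨g, f⟩, i :: v => occ h g i ++ if hi : i < arΓ g then imagePos (f ⟨i, hi⟩) v else []

variable {h}

@[simp] lemma imagePos_nil (s : Tree arΓ) : imagePos h s [] = [] := by cases s; rfl

lemma imagePos_mk_cons {g : Γ} (f : Fin (arΓ g) → Tree arΓ) {i : ℕ} (hi : i < arΓ g)
    (v : List ℕ) : imagePos h ⟨g, f⟩ (i :: v) = occ h g i ++ imagePos h (f ⟨i, hi⟩) v :=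
  congrArg _ (dif_pos hi)

lemma IsKeptPath.inPos : ∀ {s : Tree arΓ} {v : List ℕ}, IsKeptPath h s v → Paper.inPos s v
  | _, [], _ => inPos_nil _
  | ⟨_, _⟩, _ :: _, ⟨hi, _, hv⟩ => ⟨hi, hv.inPos⟩

lemma isKeptPath_of_complete (hc : Complete h) :
    ∀ {s : Tree arΓ} {v : List ℕ}, inPos s v → IsKeptPath h s v
  | ⟨_, _⟩, [], _ => trivial
  | ⟨g, _⟩, i :: _, ⟨hi, hv⟩ =>
    ⟨hi, exists_isVarPos_of_varCount_pos (hc g ⟨i, hi⟩), isKeptPath_of_complete hc hv⟩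

lemma imagePos_append :
    ∀ {s : Tree arΓ} {v : List ℕ} (w : List ℕ), inPos s v →
      imagePos h s (v ++ w) = imagePos h s v ++ imagePos h (subtree s v) w
  | _, [], _, _ => by simp
  | ⟨_, f⟩, _ :: v, w, ⟨hi, hv⟩ => by
    rw [List.cons_append, imagePos_mk_cons f hi, imagePos_mk_cons f hi, subtree_mk_cons f hi,
      imagePos_append w hv, List.append_assoc]

lemma imagePos_concat {s : Tree arΓ} {v : List ℕ} {e : ℕ} (hv : inPos s v)
    (he : e < arΓ (root (subtree s v))) :
    imagePos h s (v ++ [e]) = imagePos h s v ++ occ h (root (subtree s v)) e := by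
  rw [imagePos_append [e] hv]
  generalize subtree s v = u at he ⊢
  rcases u with ⟨g, f⟩
  rw [imagePos_mk_cons f he, imagePos_nil, List.append_nil, root_mk]

lemma imagePos_prefix {s : Tree arΓ} {v V : List ℕ} (hv : inPos s v) (hvV : v <+: V) :
    imagePos h s v <+: imagePos h s V := by
  obtain ⟨w, rfl⟩ := hvV
  rw [imagePos_append w hv]
  exact List.prefix_append _ _

lemma IsKeptPath.inPos_imagePos :
    ∀ {s : Tree arΓ} {v : List ℕ}, IsKeptPath h s v → Paper.inPos (applyHom h s) (imagePos h s v)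
  | _, [], _ => by simp
  | ⟨g, f⟩, i :: v, ⟨hi, he, hv⟩ => by
    have hocc := isVarPos_occ hi he
    rw [imagePos_mk_cons f hi, applyHom_mk, inPos_append_iff (inPos_subst _ hocc.1),
      hocc.subtree_subst]
    exact hv.inPos_imagePos

lemma IsKeptPath.subtree_imagePos :
    ∀ {s : Tree arΓ} {v : List ℕ}, IsKeptPath h s v →
      subtree (applyHom h s) (imagePos h s v) = applyHom h (subtree s v)
  | _, [], _ => by simp
  | ⟨g, f⟩, i :: v, ⟨hi, he, hv⟩ => by
    have hocc := isVarPos_occ hi he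
    rw [imagePos_mk_cons f hi, applyHom_mk, subtree_append _ (inPos_subst _ hocc.1),
      hocc.subtree_subst, subtree_mk_cons f hi]
    exact hv.subtree_imagePos

lemma IsKeptPath.inPos_imagePos_append {s : Tree arΓ} {v c : List ℕ} (hv : IsKeptPath h s v)
    (hc : Paper.inPos (h (root (subtree s v))) c) {d : Δ}
    (hd : root (subtree (h (root (subtree s v))) c) = Sum.inl d) :
    Paper.inPos (applyHom h s) (imagePos h s v ++ c) ∧
      root (subtree (applyHom h s) (imagePos h s v ++ c)) = d := by
  rw [inPos_append_iff hv.inPos_imagePos, subtree_append _ hv.inPos_imagePos,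
    hv.subtree_imagePos]
  generalize subtree s v = u at hc hd ⊢
  rcases u with ⟨g, f⟩
  rw [root_mk] at hc hd
  rw [applyHom_mk, subtree_subst _ hc]
  refine ⟨inPos_subst _ hc, ?_⟩
  rcases hs : subtree (h g) c with ⟨_ | _, _⟩ <;> rw [hs] at hd <;> cases hd
  rfl

end Images

section Decomposition

variable {Γ Sg : Type} {arΓ : Γ → ℕ} {arSg : Sg → ℕ} {ψ : ∀ g : Γ, TreeX arSg (arΓ g)}

lemma occ_not_prefix_of_root_inl {g : Γ} {e : ℕ} {he : e < arΓ g}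
    (hocc : ∃ π, IsVarPos (ψ g) π ⟨e, he⟩) {r : List ℕ} (hr : inPos (ψ g) r) {d : Sg}
    (hd : root (subtree (ψ g) r) = Sum.inl d) : ¬ occ ψ g e <+: r := by
  intro h
  have hvar := isVarPos_occ he hocc
  rw [hvar.eq_of_prefix hr h, hvar.2] at hd
  cases hd

lemma eq_of_occ_prefix_occ_append {g : Γ} {e k : ℕ} {he : e < arΓ g} {hk : k < arΓ g}
    (hocce : ∃ π, IsVarPos (ψ g) π ⟨e, he⟩) (hocck : ∃ π, IsVarPos (ψ g) π ⟨k, hk⟩)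
    {z : List ℕ} (h : occ ψ g e <+: occ ψ g k ++ z) : e = k := by
  by_contra hne
  have hne' : (⟨e, he⟩ : Fin (arΓ g)) ≠ ⟨k, hk⟩ := fun h => hne (congrArg Fin.val h)
  rcases List.prefix_or_prefix_of_prefix h (List.prefix_append _ z) with h | h
  · exact (isVarPos_occ he hocce).not_prefix (isVarPos_occ hk hocck) hne' h
  · exact (isVarPos_occ hk hocck).not_prefix (isVarPos_occ he hocce) hne'.symm h

variable (ψ)

/-- `x = imagePos ψ s v ++ r` lies in the copy of `ψ (s(v))` placed at `imagePos ψ s v`, at a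
`Sg`-labelled position `r` of it. -/
def IsDecomp (s : Tree arΓ) (x v r : List ℕ) : Prop :=
  IsKeptPath ψ s v ∧ x = imagePos ψ s v ++ r ∧ inPos (ψ (root (subtree s v))) r ∧
    ∃ d, root (subtree (ψ (root (subtree s v))) r) = Sum.inl d

variable {ψ}

lemma IsDecomp.imagePos_prefix {s : Tree arΓ} {x v r : List ℕ} (h : IsDecomp ψ s x v r) :
    imagePos ψ s v <+: x :=
  ⟨r, h.2.1.symm⟩

lemma isDecomp_mk_nil {g : Γ} {f : Fin (arΓ g) → Tree arΓ} {x r : List ℕ} :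
    IsDecomp ψ ⟨g, f⟩ x [] r ↔ x = r ∧ inPos (ψ g) r ∧ ∃ d, root (subtree (ψ g) r) = Sum.inl d := by
  simp only [IsDecomp, IsKeptPath, imagePos_nil, List.nil_append, true_and]
  rfl

lemma IsDecomp.of_mk_cons {g : Γ} {f : Fin (arΓ g) → Tree arΓ} {x v r : List ℕ} {k : ℕ}
    (h : IsDecomp ψ ⟨g, f⟩ x (k :: v) r) :
    ∃ hk : k < arΓ g, (∃ π, IsVarPos (ψ g) π ⟨k, hk⟩) ∧
      x = occ ψ g k ++ (imagePos ψ (f ⟨k, hk⟩) v ++ r) ∧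
      IsDecomp ψ (f ⟨k, hk⟩) (imagePos ψ (f ⟨k, hk⟩) v ++ r) v r := by
  obtain ⟨⟨hk, hocc, hv⟩, rfl, hr, hd⟩ := h
  rw [subtree_mk_cons f hk] at hr hd
  exact ⟨hk, hocc, by rw [imagePos_mk_cons f hk, List.append_assoc], hv, rfl, hr, hd⟩

/-- Linearity makes every occurrence of a variable the chosen one. -/
lemma exists_isDecomp (hψ : Linear ψ) {s : Tree arΓ} :
    ∀ {x : List ℕ}, inPos (applyHom ψ s) x → ∃ v r, IsDecomp ψ s x v r := by
  induction s with
  | mk g f ih =>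
    intro x hx
    rw [applyHom_mk] at hx
    rcases inPos_subst_cases _ hx with ⟨hr, d, hd⟩ | ⟨i, π, y, hπ, rfl, hy⟩
    · exact ⟨[], x, isDecomp_mk_nil.2 ⟨rfl, hr, d, hd⟩⟩
    · obtain ⟨v, r, hv, rfl, hr, hd⟩ := ih i hy
      have hπ' : IsVarPos (ψ g) π ⟨i, i.isLt⟩ := hπ
      refine ⟨i :: v, r, ⟨i.isLt, ⟨π, hπ'⟩, hv⟩, ?_, ?_⟩
      · rw [imagePos_mk_cons f i.isLt, ← eq_occ_of_linear hψ i.isLt hπ', List.append_assoc]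
      · rw [subtree_mk_cons f i.isLt]
        exact ⟨hr, hd⟩

lemma IsDecomp.prefix_of_imagePos_prefix :
    ∀ {s : Tree arΓ} {V v x r : List ℕ}, IsDecomp ψ s x v r → IsKeptPath ψ s V →
      imagePos ψ s V <+: x → V <+: v
  | _, [], _, _, _, _, _, _ => List.nil_prefix
  | ⟨g, f⟩, e :: V, [], x, r, hd, ⟨he, hocce, _⟩, hx => by
    obtain ⟨rfl, hr, d, hrd⟩ := isDecomp_mk_nil.1 hd
    rw [imagePos_mk_cons f he] at hx
    exact absurd ((List.prefix_append _ _).trans hx) (occ_not_prefix_of_root_inl hocce hr hrd)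
  | ⟨g, f⟩, e :: V, k :: v, x, r, hd, ⟨he, hocce, hV⟩, hx => by
    obtain ⟨hk, hocck, rfl, hd'⟩ := hd.of_mk_cons
    rw [imagePos_mk_cons f he] at hx
    obtain rfl := eq_of_occ_prefix_occ_append hocce hocck ((List.prefix_append _ _).trans hx)
    exact List.cons_prefix_cons.2
      ⟨rfl, hd'.prefix_of_imagePos_prefix hV ((List.prefix_append_right_inj _).1 hx)⟩

/-- A path through `x` towards the copy of `s|_V` leaves the copy of `ψ (s(v))` through an
occurrence of a variable `x_e` with `v ++ [e] <+: V`. -/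
lemma IsDecomp.exists_concat_prefix :
    ∀ {s : Tree arΓ} {v V x r : List ℕ} {i : ℕ}, IsDecomp ψ s x v r → IsKeptPath ψ s V →
      x ++ [i] <+: imagePos ψ s V →
      ∃ e, v ++ [e] <+: V ∧ r ++ [i] <+: occ ψ (root (subtree s v)) e
  | _, _, [], _, _, _, _, _, hx => by simp at hx
  | ⟨g, f⟩, [], e :: V, x, r, i, hd, ⟨he, hocce, _⟩, hx => by
    obtain ⟨rfl, hr, d, hrd⟩ := isDecomp_mk_nil.1 hd
    rw [imagePos_mk_cons f he] at hx
    refine ⟨e, by simp, ?_⟩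
    rcases List.prefix_or_prefix_of_prefix hx (List.prefix_append _ _) with h | h
    · exact h
    · rcases List.prefix_concat_iff.1 h with h | h
      · exact h ▸ List.prefix_rfl
      · exact absurd h (occ_not_prefix_of_root_inl hocce hr hrd)
  | ⟨g, f⟩, k :: v, e :: V, x, r, i, hd, ⟨he, hocce, hV⟩, hx => by
    obtain ⟨hk, hocck, rfl, hd'⟩ := hd.of_mk_cons
    rw [imagePos_mk_cons f he, List.append_assoc] at hx
    obtain rfl := eq_of_occ_prefix_occ_append hocck hocce ((List.prefix_append _ _).trans hx)
    obtain ⟨e', hV', hr⟩ :=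
      hd'.exists_concat_prefix hV ((List.prefix_append_right_inj _).1 hx)
    exact ⟨e', List.cons_prefix_cons.2 ⟨rfl, hV'⟩, by rwa [subtree_mk_cons f hk]⟩

/-- Inner positions of `ψ (s(v))` have depth below its height. -/
lemma IsDecomp.length_add_one_lt {ℓ : ℕ} (hℓ : ∀ γ, height (ψ γ) < ℓ) {s : Tree arΓ}
    {x v r : List ℕ} (hd : IsDecomp ψ s x v r)
    (hx : 0 < arSg (root (subtree (applyHom ψ s) x))) : r.length + 1 < ℓ := by
  obtain ⟨hv, rfl, hr, d, hrd⟩ := hd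
  rw [(hv.inPos_imagePos_append hr hrd).2] at hx
  have := length_lt_height hr (by rw [hrd]; exact hx)
  have := hℓ (root (subtree s v))
  omega

end Decomposition

lemma prefix_of_isChain_of_length_le {α : Type*} {S : Set (List α)}
    (hS : IsChain (· <+: ·) S) {x y : List α} (hx : x ∈ S) (hy : y ∈ S)
    (hxy : x.length ≤ y.length) : x <+: y := by
  by_cases hne : x = y
  · exact hne ▸ List.prefix_rfl
  · rcases hS hx hy hne with h | h
    · exact h
    · exact (h.eq_of_length_le hxy).symm ▸ List.prefix_rfl

section Forks

variable {Γ Δ : Type} {arΓ : Γ → ℕ} {arΔ : Δ → ℕ} {φ : ∀ g : Γ, TreeX arΔ (arΓ g)}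
  {s : Tree arΓ}

/-- The occurrences of `x_{e₁}` and `x_{e₂}` in `φ (s(v))` fork at a `Δ`-labelled position. -/
lemma exists_branch_between_imagePos (hφ : Complete φ) {v : List ℕ} {e₁ e₂ : ℕ} (hne : e₁ ≠ e₂)
    (h₁ : inPos s (v ++ [e₁])) (h₂ : inPos s (v ++ [e₂])) :
    ∃ P α β, (P, α, β) ∈ branch (applyHom φ s) ∧ imagePos φ s v <+: P ∧
      P ++ [α] <+: imagePos φ s (v ++ [e₁]) ∧ P ++ [β] <+: imagePos φ s (v ++ [e₂]) := by
  have hv : inPos s v := inPos_of_prefix (List.prefix_append v _) h₁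
  set g := root (subtree s v)
  have he₁ : e₁ < arΓ g := lt_arity_of_inPos_concat h₁
  have he₂ : e₂ < arΓ g := lt_arity_of_inPos_concat h₂
  have hocc₁ := isVarPos_occ he₁ (exists_isVarPos_of_varCount_pos (hφ g ⟨e₁, he₁⟩))
  have hocc₂ := isVarPos_occ he₂ (exists_isVarPos_of_varCount_pos (hφ g ⟨e₂, he₂⟩))
  have hne' : (⟨e₁, he₁⟩ : Fin (arΓ g)) ≠ ⟨e₂, he₂⟩ := fun h => hne (congrArg Fin.val h)
  obtain ⟨c, α, β, hαβ, hα, hβ⟩ := exists_fork_of_not_prefix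
    (hocc₁.not_prefix hocc₂ hne') (hocc₂.not_prefix hocc₁ hne'.symm)
  have hcα := inPos_of_prefix hα hocc₁.1
  have hcβ := inPos_of_prefix hβ hocc₂.1
  have hαlt := lt_arity_of_inPos_concat hcα
  have hβlt := lt_arity_of_inPos_concat hcβ
  rcases hroot : root (subtree (φ g) c) with d | i
  · rw [hroot] at hαlt hβlt
    obtain ⟨hP, hPd⟩ := (isKeptPath_of_complete hφ hv).inPos_imagePos_append
      (inPos_of_prefix (List.prefix_append c _) hcα) hroot
    refine ⟨imagePos φ s v ++ c, α, β, ⟨hP, ?_, ?_, ?_, hαβ⟩, List.prefix_append _ _, ?_, ?_⟩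
    · rw [hPd]; change α < arΔ d at hαlt; change β < arΔ d at hβlt; omega
    · rw [hPd]; exact hαlt
    · rw [hPd]; exact hβlt
    · rw [imagePos_concat hv he₁, List.append_assoc]
      exact (List.prefix_append_right_inj _).2 hα
    · rw [imagePos_concat hv he₂, List.append_assoc]
      exact (List.prefix_append_right_inj _).2 hβ
  · rw [hroot] at hαlt
    exact absurd hαlt (Nat.not_lt_zero _)

variable (φ) in
def IsSPFork (ℓ n : ℕ) (s : Tree arΓ) (v : List ℕ) : Prop :=
  ∃ e₁ e₂, e₁ ≠ e₂ ∧ inPos s (v ++ [e₁]) ∧ inPos s (v ++ [e₂]) ∧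
    HasSPChain ℓ n (applyHom φ s) (imagePos φ s (v ++ [e₁])) ∧
    HasSPChain ℓ n (applyHom φ s) (imagePos φ s (v ++ [e₂]))

variable {ℓ n : ℕ}

/-- Whichever child `v ++ [d]` is given, one of the two children of the fork differs from it,
and the copies of these two fork inside the copy of `φ (s(v))`. -/
lemma IsSPFork.exists_mem_SP (hℓ : 0 < ℓ) (hφ : Complete φ) {v : List ℕ}
    (hv : IsSPFork φ ℓ n s v) {d : ℕ} (hd : inPos s (v ++ [d]))
    (hdc : HasSPChain ℓ n (applyHom φ s) (imagePos φ s (v ++ [d]))) :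
    ∃ P ∈ SP ℓ n (applyHom φ s),
      imagePos φ s v <+: P ∧ ∃ α, P ++ [α] <+: imagePos φ s (v ++ [d]) := by
  obtain ⟨e₁, e₂, hne, h₁, h₂, hc₁, hc₂⟩ := hv
  obtain ⟨c, hdc', hc, hcc⟩ : ∃ c, d ≠ c ∧ inPos s (v ++ [c]) ∧
      HasSPChain ℓ n (applyHom φ s) (imagePos φ s (v ++ [c])) := by
    by_cases hde : d = e₁
    · exact ⟨e₂, hde ▸ hne, h₂, hc₂⟩
    · exact ⟨e₁, hde, h₁, hc₁⟩
  obtain ⟨P, α, β, hbr, hvP, hα, hβ⟩ := exists_branch_between_imagePos hφ hdc' hd hc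
  exact ⟨P, ⟨α, β, (mem_SSP_iff hℓ).2 ⟨hbr, hdc.of_prefix hα, hcc.of_prefix hβ⟩⟩, hvP, α, hα⟩

/-- Each fork of a chain of forks yields its own `SP`-position, between the copy of the fork and
the copy of its child towards the top of the chain. -/
lemma card_le_ncard_SPIcc_of_isChain (hℓ : 0 < ℓ) (hφ : Complete φ) {S : Finset (List ℕ)}
    (hS : S.Nonempty) (hchain : IsChain (· <+: ·) (S : Set (List ℕ)))
    (hfork : ∀ v ∈ S, IsSPFork φ ℓ n s v) {a : List ℕ} (ha : ∀ v ∈ S, a <+: imagePos φ s v) :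
    ∃ B, S.card ≤ (SPIcc ℓ n (applyHom φ s) a B).ncard := by
  obtain ⟨w, hwS, hwmax⟩ := S.exists_max_image List.length hS
  obtain ⟨e, -, -, hwe, -, hce, -⟩ := hfork w hwS
  set W := w ++ [e]
  have hvW : ∀ v ∈ S, ∃ d, v ++ [d] <+: W := fun v hv =>
    ⟨_, List.concat_get_prefix
      ((prefix_of_isChain_of_length_le hchain hv hwS (hwmax v hv)).trans (List.prefix_append w _))
      (by simp only [List.length_append, List.length_singleton]; have := hwmax v hv; omega)⟩
  choose! d hd using hvW
  have hdpos : ∀ v ∈ S, inPos s (v ++ [d v]) := fun v hv => inPos_of_prefix (hd v hv) hwe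
  choose! P hPSP hvP α hPα using fun v hv => (hfork v hv).exists_mem_SP hℓ hφ (hdpos v hv)
    (hce.of_prefix (imagePos_prefix (hdpos v hv) (hd v hv)))
  have hlt : ∀ v ∈ S, ∀ v' ∈ S, v <+: v' → v ≠ v' → (P v).length < (P v').length := by
    intro v hv v' hv' hvv' hne
    have hdv' : v ++ [d v] <+: v' := concat_prefix_of_prefix_of_lt (hd v hv)
      ((prefix_of_isChain_of_length_le hchain hv' hwS (hwmax v' hv')).trans
        (List.prefix_append w _)) hvv' hne
    have h₁ := (hPα v hv).length_le
    have h₂ := (imagePos_prefix (h := φ) (hdpos v hv) hdv').length_le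
    have h₃ := (hvP v' hv').length_le
    simp only [List.length_append, List.length_singleton] at h₁
    omega
  refine ⟨imagePos φ s W, ?_⟩
  rw [← Set.ncard_coe_finset]
  refine Set.ncard_le_ncard_of_injOn P (fun v hv => ⟨(ha v hv).trans (hvP v hv), ?_, hPSP v hv⟩)
    (fun v hv v' hv' hPP => ?_) (SPIcc_finite _ _)
  · exact (List.prefix_append _ _).trans ((hPα v hv).trans
      (imagePos_prefix (hdpos v hv) (hd v hv)))
  · by_contra hne
    rcases hchain hv hv' hne with h | h
    · exact (hlt v hv v' hv' h hne).ne (congrArg List.length hPP)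
    · exact (hlt v' hv' v hv h (Ne.symm hne)).ne (congrArg List.length hPP.symm)

end Forks

lemma card_le_of_isChain_of_length_mem {α : Type*} {T : Finset (List α)}
    (hT : IsChain (· <+: ·) (T : Set (List α))) {p q : ℕ}
    (hlen : ∀ x ∈ T, p ≤ x.length ∧ x.length < p + q) : T.card ≤ q := by
  have := Finset.card_le_card_of_injOn List.length
    (t := Finset.Ico p (p + q)) (fun x hx => Finset.mem_Ico.2 (hlen x hx))
    (fun x hx y hy hxy => (prefix_of_isChain_of_length_le hT hx hy hxy.le).eq_of_length hxy)
  simpa using this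

section Origins

variable {Γ Sg : Type} {arΓ : Γ → ℕ} {arSg : Sg → ℕ} {ψ : ∀ g : Γ, TreeX arSg (arΓ g)}
  {s : Tree arΓ} {F : Finset (List ℕ)} {orig rest : List ℕ → List ℕ}

lemma isChain_image_of_isDecomp (hF : IsChain (· <+: ·) (F : Set (List ℕ)))
    (hdec : ∀ x ∈ F, IsDecomp ψ s x (orig x) (rest x)) :
    IsChain (· <+: ·) (F.image orig : Set (List ℕ)) := by
  simp only [IsChain, Finset.coe_image]
  rintro _ ⟨x, hx, rfl⟩ _ ⟨y, hy, rfl⟩ hne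
  have hlt : ∀ {x y}, x ∈ F → y ∈ F → x <+: y → orig x <+: orig y := fun {x y} hx hy hxy =>
    (hdec y hy).prefix_of_imagePos_prefix (hdec x hx).1 ((hdec x hx).imagePos_prefix.trans hxy)
  rcases hF.total hx hy with h | h
  · exact Or.inl (hlt hx hy h)
  · exact Or.inr (hlt hy hx h)

/-- A chain of inner positions of `ψ̂ s` meets the copy of each `ψ γ` in at most `ℓ - 1`
positions, one per depth below its height. -/
lemma lt_card_image_of_isDecomp {ℓ m : ℕ} (hℓ : ∀ γ, height (ψ γ) < ℓ) (hm : 0 < m)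
    (hF : IsChain (· <+: ·) (F : Set (List ℕ)))
    (hinner : ∀ x ∈ F, 0 < arSg (root (subtree (applyHom ψ s) x)))
    (hdec : ∀ x ∈ F, IsDecomp ψ s x (orig x) (rest x)) (hcard : ℓ * m ≤ F.card) :
    m < (F.image orig).card := by
  classical
  obtain ⟨ℓ, rfl⟩ : ∃ ℓ', ℓ = ℓ' + 1 := ⟨ℓ - 1, by have := hℓ (root s); omega⟩
  have hfib : ∀ v ∈ F.image orig, (F.filter (orig · = v)).card ≤ ℓ := by
    intro v _
    refine card_le_of_isChain_of_length_mem (p := (imagePos ψ s v).length)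
      (hF.mono (Finset.coe_subset.2 (Finset.filter_subset _ _))) fun x hx => ?_
    obtain ⟨hxF, rfl⟩ := Finset.mem_filter.1 hx
    have := (hdec x hxF).length_add_one_lt hℓ (hinner x hxF)
    have := congrArg List.length (hdec x hxF).2.1
    rw [List.length_append] at this
    omega
  by_contra! h
  have := calc (ℓ + 1) * m ≤ F.card := hcard
    _ ≤ ℓ * (F.image orig).card := Finset.card_le_mul_card_image F ℓ hfib
    _ ≤ ℓ * m := Nat.mul_le_mul_left ℓ h
  rw [Nat.succ_mul] at this
  omega

lemma card_filter_not_prefix_le_one {a : List ℕ} (ha : ∀ x ∈ F, a <+: x)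
    (hdec : ∀ x ∈ F, IsDecomp ψ s x (orig x) (rest x)) :
    ((F.image orig).filter (fun v => ¬ a <+: imagePos ψ s v)).card ≤ 1 := by
  have hbelow : ∀ x ∈ F, ¬ a <+: imagePos ψ s (orig x) → ∀ y ∈ F, orig x <+: orig y := by
    intro x hx hax y hy
    have hpre : imagePos ψ s (orig x) <+: a :=
      (List.prefix_or_prefix_of_prefix (hdec x hx).imagePos_prefix (ha x hx)).resolve_right hax
    exact (hdec y hy).prefix_of_imagePos_prefix (hdec x hx).1 (hpre.trans (ha y hy))
  refine Finset.card_le_one.2 fun v₁ hv₁ v₂ hv₂ => ?_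
  simp only [Finset.mem_filter, Finset.mem_image] at hv₁ hv₂
  obtain ⟨⟨x₁, hx₁, rfl⟩, h₁⟩ := hv₁
  obtain ⟨⟨x₂, hx₂, rfl⟩, h₂⟩ := hv₂
  exact (hbelow x₁ hx₁ h₁ x₂ hx₂).eq_of_length_le (hbelow x₂ hx₂ h₂ x₁ hx₁).length_le

/-- Of the more than `m` origins of the chain, at most one has its copy outside the subtree
at `a`. -/
lemma exists_origins (hψ : Linear ψ) {ℓ : ℕ} (hℓ : ∀ γ, height (ψ γ) < ℓ) {k m : ℕ}
    {a b : List ℕ} (hm : 0 < m) (hc : ℓ * m ≤ (SPIcc ℓ k (applyHom ψ s) a b).ncard) :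
    ∃ S : Finset (List ℕ), m ≤ S.card ∧ IsChain (· <+: ·) (S : Set (List ℕ)) ∧
      ∀ v ∈ S, a <+: imagePos ψ s v ∧ ∃ x r, IsDecomp ψ s x v r ∧ x ∈ SP ℓ k (applyHom ψ s) := by
  classical
  have hfin := SPIcc_finite (ℓ := ℓ) (n := k) (t := applyHom ψ s) a b
  set F := hfin.toFinset
  have hmem : ∀ x ∈ F, x ∈ SPIcc ℓ k (applyHom ψ s) a b := fun x hx => hfin.mem_toFinset.1 hx
  choose! orig rest hdec using fun x (hx : x ∈ F) =>
    exists_isDecomp hψ (inPos_of_mem_SP (hmem x hx).2.2)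
  have hF : IsChain (· <+: ·) (F : Set (List ℕ)) := fun x hx y hy _ =>
    List.prefix_or_prefix_of_prefix (hmem x hx).2.1 (hmem y hy).2.1
  have hinner : ∀ x ∈ F, 0 < arSg (root (subtree (applyHom ψ s) x)) := fun x hx => by
    obtain ⟨i, j, hij⟩ := (hmem x hx).2.2
    exact lt_of_lt_of_le two_pos (SSP_subset_branch hij).2.1
  have hlt := lt_card_image_of_isDecomp hℓ hm hF hinner hdec
    (by rwa [Set.ncard_eq_toFinset_card _ hfin] at hc)
  have hone := card_filter_not_prefix_le_one (fun x hx => (hmem x hx).1) hdec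
  have hsplit := Finset.card_filter_add_card_filter_not (s := F.image orig)
    (fun v => a <+: imagePos ψ s v)
  refine ⟨(F.image orig).filter (fun v => a <+: imagePos ψ s v), by omega,
    (isChain_image_of_isDecomp hF hdec).mono (Finset.coe_subset.2 (Finset.filter_subset _ _)),
    fun v hv => ?_⟩
  obtain ⟨hvO, hav⟩ := Finset.mem_filter.1 hv
  obtain ⟨x, hx, rfl⟩ := Finset.mem_image.1 hvO
  exact ⟨hav, x, rest x, hdec x hx, (hmem x hx).2.2⟩

end Origins

section Transfer

variable {Γ Sg Δ : Type} {arΓ : Γ → ℕ} {arSg : Sg → ℕ} {arΔ : Δ → ℕ}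
  {ψ : ∀ g : Γ, TreeX arSg (arΓ g)} {φ : ∀ g : Γ, TreeX arΔ (arΓ g)} {ℓ : ℕ} {s : Tree arΓ}

variable (ψ φ ℓ s) in
def TransfersChains (n : ℕ) : Prop :=
  ∀ a, HasSPChain ℓ (n + 1) (applyHom ψ s) a → ∃ V, IsKeptPath ψ s V ∧
    a <+: imagePos ψ s V ∧ HasSPChain ℓ n (applyHom φ s) (imagePos φ s V)

/-- The two chains of `x ∈ SP ℓ (n + 1) (ψ̂ s)` leave the copy of `ψ (s(v))` through distinct
variables, since they start at distinct children of `x`. -/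
lemma isSPFork_of_mem_SP {n : ℕ} (hℓ : 0 < ℓ) (hT : TransfersChains ψ φ ℓ s n)
    {x v r : List ℕ} (hd : IsDecomp ψ s x v r) (hx : x ∈ SP ℓ (n + 1) (applyHom ψ s)) :
    IsSPFork φ ℓ n s v := by
  obtain ⟨i, j, hij⟩ := hx
  obtain ⟨hbr, hci, hcj⟩ := (mem_SSP_iff hℓ).1 hij
  obtain ⟨V₁, hV₁, hxV₁, hc₁⟩ := hT _ hci
  obtain ⟨V₂, hV₂, hxV₂, hc₂⟩ := hT _ hcj
  obtain ⟨e₁, hv₁, hr₁⟩ := hd.exists_concat_prefix hV₁ hxV₁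
  obtain ⟨e₂, hv₂, hr₂⟩ := hd.exists_concat_prefix hV₂ hxV₂
  have hne : e₁ ≠ e₂ := by
    rintro rfl
    have hrij : r ++ [i] = r ++ [j] :=
      (List.prefix_or_prefix_of_prefix hr₁ hr₂).elim (·.eq_of_length (by simp))
        (fun h => (h.eq_of_length (by simp)).symm)
    exact hbr.2.2.2.2 (by simpa using hrij)
  have hp₁ := inPos_of_prefix hv₁ hV₁.inPos
  have hp₂ := inPos_of_prefix hv₂ hV₂.inPos
  exact ⟨e₁, e₂, hne, hp₁, hp₂, hc₁.of_prefix (imagePos_prefix hp₁ hv₁),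
    hc₂.of_prefix (imagePos_prefix hp₂ hv₂)⟩

lemma transfersChains_zero (hψ : Linear ψ) (hℓ : ∀ γ, height (ψ γ) < ℓ) :
    TransfersChains ψ φ ℓ s 0 := by
  rintro a ⟨b, hb⟩
  obtain ⟨S, hS, -, horig⟩ := exists_origins hψ hℓ one_pos (by simpa using hb)
  obtain ⟨v, hv⟩ := Finset.card_pos.1 hS
  obtain ⟨hav, _, _, hd, -⟩ := horig v hv
  exact ⟨v, hd.1, hav, trivial⟩

/-- The origins of a chain of `ℓ ^ (n + 2)` positions of `SP ℓ (n + 1) (ψ̂ s)` are at least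
`ℓ ^ (n + 1)` forks, each contributing a position to one chain of `SP ℓ n (φ̂ s)`. -/
lemma TransfersChains.succ (hψ : Linear ψ) (hφ : Complete φ) (hℓ : ∀ γ, height (ψ γ) < ℓ)
    {n : ℕ} (hT : TransfersChains ψ φ ℓ s n) : TransfersChains ψ φ ℓ s (n + 1) := by
  have hℓ₀ : 0 < ℓ := (Nat.zero_le _).trans_lt (hℓ (root s))
  rintro a ⟨b, hb⟩
  obtain ⟨S, hS, hchain, horig⟩ := exists_origins hψ hℓ (pow_pos hℓ₀ (n + 1))
    (by rwa [← pow_succ'])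
  have hSne : S.Nonempty := Finset.card_pos.1 ((pow_pos hℓ₀ _).trans_le hS)
  obtain ⟨V, hVS, hVmin⟩ := S.exists_min_image List.length hSne
  obtain ⟨haV, _, _, hd, -⟩ := horig V hVS
  have hfork : ∀ v ∈ S, IsSPFork φ ℓ n s v := fun v hv => by
    obtain ⟨-, x, r, hd, hx⟩ := horig v hv
    exact isSPFork_of_mem_SP hℓ₀ hT hd hx
  obtain ⟨B, hB⟩ := card_le_ncard_SPIcc_of_isChain hℓ₀ hφ hSne hchain hfork
    (a := imagePos φ s V) fun v hv =>
      imagePos_prefix hd.1.inPos (prefix_of_isChain_of_length_le hchain hVS hv (hVmin v hv))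
  exact ⟨V, hd.1, haV, B, hS.trans hB⟩

lemma transfersChains (hψ : Linear ψ) (hφ : Complete φ) (hℓ : ∀ γ, height (ψ γ) < ℓ) :
    ∀ n, TransfersChains ψ φ ℓ s n
  | 0 => transfersChains_zero hψ hℓ
  | n + 1 => (transfersChains hψ hφ hℓ n).succ hψ hφ hℓ

end Transfer

/-- for a bimorphism with linear input homomorphism `ψ` and complete
output homomorphism `φ`, and `ℓ > height(ψ(γ))` for every symbol `γ`: for every
tree `s`, if `SP^ℓ_{n+1}(ψ̂(s)) ≠ ∅` then `SP^ℓ_n(φ̂(s)) ≠ ∅`. -/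
theorem SP_nonempty_of_bimorphism {Γ Sg Δ : Type} {arΓ : Γ → ℕ}
    {arSg : Sg → ℕ} {arΔ : Δ → ℕ}
    (ψ : ∀ g : Γ, TreeX arSg (arΓ g)) (hψ : Linear ψ)
    (φ : ∀ g : Γ, TreeX arΔ (arΓ g)) (hφ : Complete φ)
    (ℓ n : ℕ) (hℓ : ∀ γ : Γ, height (ψ γ) < ℓ)
    (s : Tree arΓ)
    (h : (SP ℓ (n + 1) (applyHom ψ s)).Nonempty) :
    (SP ℓ n (applyHom φ s)).Nonempty := by
  have hℓ₀ : 0 < ℓ := (Nat.zero_le _).trans_lt (hℓ (root s))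
  obtain ⟨x, hx⟩ := h
  obtain ⟨v, r, hd⟩ := exists_isDecomp hψ (inPos_of_mem_SP hx)
  have hfork := isSPFork_of_mem_SP hℓ₀ (transfersChains hψ hφ hℓ n) hd hx
  have ⟨e, _, _, he, _, hce, _⟩ := hfork
  obtain ⟨P, hP, -⟩ := hfork.exists_mem_SP hℓ₀ hφ he hce
  exact ⟨P, hP⟩

end Paper
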